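/- With G* defined as the optimal reduced model (G*(x) = V_s V_s^T E[G(X)|U_r^T X = U_r^T x] + (I_m − V_s V_s^T) E[G(X)]), the minimal error satisfies E[‖G(X) − G*(X)‖²] = Tr(Cov(G(X))) − Tr(V_s^T Cov(E[G(X) | U_r^T X]) V_s). -/

import Mathlib

/-! Write `Y = G(X)`, `c = E Y`, `𝒢 = σ(Uᵀ X)` and `P = V Vᵀ`, so that `Pᵀ P = P` and the error
is `(Y - c) - P (E[Y | 𝒢] - c)`. Since `Pᵀ P = P`, its squared norm expands to
`|Y - c|² - 2 ⟨Y - c, P (E[Y | 𝒢] - c)⟩ + ⟨E[Y | 𝒢] - c, P (E[Y | 𝒢] - c)⟩`. As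
`P (E[Y | 𝒢] - c)` is `𝒢`-measurable, the expectation of the middle term does not change when `Y`
is replaced by `E[Y | 𝒢]`, so the last two terms combine into `-E⟨E[Y | 𝒢] - c, P (E[Y | 𝒢] - c)⟩`.
Both remaining expectations are quadratic forms in centred vectors, i.e. traces against the
covariance matrices of `Y` and of `E[Y | 𝒢]`, whose mean is again `c`. -/

noncomputable section
open MeasureTheory Matrix

def sqn {n : ℕ} (v : Fin n → ℝ) : ℝ := ∑ i, (v i)^2

/-- Covariance matrix of a square-integrable random vector. -/
def covMatrix {n : ℕ} {Ω : Type*} [MeasurableSpace Ω] (μ : Measure Ω)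
    (Z : Ω → (Fin n → ℝ)) : Matrix (Fin n) (Fin n) ℝ :=
  Matrix.of fun i j =>
    ∫ ω, (Z ω i - ∫ ω', Z ω' i ∂μ) * (Z ω j - ∫ ω', Z ω' j ∂μ) ∂μ

section Projection

variable {n : ℕ}

lemma sqn_eq_dotProduct (v : Fin n → ℝ) : sqn v = v ⬝ᵥ v := by
  simp only [sqn, dotProduct, sq]

lemma sqn_sub_mulVec_of_transpose_mul_self {P : Matrix (Fin n) (Fin n) ℝ} (hP : Pᵀ * P = P)
    (a b : Fin n → ℝ) :
    sqn (a - P *ᵥ b) = a ⬝ᵥ a - 2 * (a ⬝ᵥ P *ᵥ b) + b ⬝ᵥ P *ᵥ b := by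
  have hPP : P *ᵥ b ⬝ᵥ P *ᵥ b = b ⬝ᵥ P *ᵥ b := by
    rw [dotProduct_mulVec, ← mulVec_transpose, mulVec_mulVec, hP, dotProduct_comm]
  rw [sqn_eq_dotProduct, sub_dotProduct, dotProduct_sub, dotProduct_sub, hPP,
    dotProduct_comm (P *ᵥ b) a]
  ring

lemma transpose_mul_self_of_orthonormal {s : ℕ} {V : Matrix (Fin n) (Fin s) ℝ}
    (hV : Vᵀ * V = 1) : (V * Vᵀ)ᵀ * (V * Vᵀ) = V * Vᵀ := by
  rw [transpose_mul, transpose_transpose, Matrix.mul_assoc, ← Matrix.mul_assoc Vᵀ, hV,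
    Matrix.one_mul]

lemma trace_mul_transpose_transpose_mul {s : ℕ} (V : Matrix (Fin n) (Fin s) ℝ)
    (C : Matrix (Fin n) (Fin n) ℝ) : ((V * Vᵀ)ᵀ * C).trace = (Vᵀ * C * V).trace := by
  rw [transpose_mul, transpose_transpose, Matrix.mul_assoc, trace_mul_comm, Matrix.mul_assoc]

end Projection

section SecondMoments

variable {Ω : Type*} {m m₀ : MeasurableSpace Ω} {μ : Measure Ω} {n : ℕ}

lemma memLp_two_of_integrable_sqn {Z : Ω → Fin n → ℝ} (hZ : AEStronglyMeasurable Z μ)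
    (h : Integrable (fun ω => sqn (Z ω)) μ) : MemLp Z 2 μ := by
  refine memLp_pi_iff.2 fun i => ?_
  have hZi : AEStronglyMeasurable (fun ω => Z ω i) μ :=
    (continuous_apply i).comp_aestronglyMeasurable hZ
  refine (memLp_two_iff_integrable_sq hZi).2 (h.mono' (hZi.pow 2) (ae_of_all _ fun ω => ?_))
  rw [Real.norm_eq_abs, abs_of_nonneg (sq_nonneg _)]
  exact Finset.single_le_sum (fun j _ => sq_nonneg (Z ω j)) (Finset.mem_univ i)

lemma integrable_dotProduct {Z W : Ω → Fin n → ℝ} (hZ : MemLp Z 2 μ) (hW : MemLp W 2 μ) :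
    Integrable (fun ω => Z ω ⬝ᵥ W ω) μ :=
  integrable_finsetSum _ fun i _ => (hZ.eval i).integrable_mul (hW.eval i)

lemma integral_dotProduct_mulVec {Z W : Ω → Fin n → ℝ} (hZ : MemLp Z 2 μ) (hW : MemLp W 2 μ)
    (A : Matrix (Fin n) (Fin n) ℝ) :
    ∫ ω, Z ω ⬝ᵥ A *ᵥ W ω ∂μ = ∑ i, ∑ j, A i j * ∫ ω, Z ω i * W ω j ∂μ := by
  have hZW : ∀ i j, Integrable (fun ω => Z ω i * W ω j) μ :=
    fun i j => (hZ.eval i).integrable_mul (hW.eval j)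
  have hpt : ∀ ω, Z ω ⬝ᵥ A *ᵥ W ω = ∑ i, ∑ j, A i j * (Z ω i * W ω j) := fun ω => by
    simp only [dotProduct, mulVec, Finset.mul_sum]
    exact Finset.sum_congr rfl fun i _ => Finset.sum_congr rfl fun j _ => by ring
  simp_rw [hpt]
  rw [integral_finsetSum _ fun i _ =>
    integrable_finsetSum _ fun j _ => (hZW i j).const_mul (A i j)]
  refine Finset.sum_congr rfl fun i _ => ?_
  rw [integral_finsetSum _ fun j _ => (hZW i j).const_mul (A i j)]
  exact Finset.sum_congr rfl fun j _ => integral_const_mul _ _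

lemma integral_centered_dotProduct_mulVec_eq_trace [IsFiniteMeasure μ] {Z : Ω → Fin n → ℝ}
    (hZ : MemLp Z 2 μ) (A : Matrix (Fin n) (Fin n) ℝ) :
    ∫ ω, (Z ω - ∫ ω', Z ω' ∂μ) ⬝ᵥ A *ᵥ (Z ω - ∫ ω', Z ω' ∂μ) ∂μ
      = (Aᵀ * covMatrix μ Z).trace := by
  have hc : MemLp (fun ω => Z ω - ∫ ω', Z ω' ∂μ) 2 μ := hZ.sub (memLp_const _)
  have hmean : ∀ i, (∫ ω', Z ω' ∂μ) i = ∫ ω', Z ω' i ∂μ :=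
    eval_integral fun i => (hZ.eval i).integrable one_le_two
  rw [integral_dotProduct_mulVec hc hc, Matrix.trace, Finset.sum_comm]
  simp only [diag_apply, mul_apply, transpose_apply, covMatrix, of_apply, Pi.sub_apply, hmean]

lemma MeasureTheory.MemLp.matrix_mulVec {p : ENNReal} {Z : Ω → Fin n → ℝ} (hZ : MemLp Z p μ)
    (A : Matrix (Fin n) (Fin n) ℝ) : MemLp (fun ω => A *ᵥ Z ω) p μ :=
  (Matrix.toLin' A).toContinuousLinearMap.comp_memLp' hZ

lemma integral_condExp_mul_of_stronglyMeasurable (hm : m ≤ m₀) [SigmaFinite (μ.trim hm)]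
    {f g : Ω → ℝ} (hg : StronglyMeasurable[m] g) (hf : Integrable f μ)
    (hfg : Integrable (f * g) μ) :
    ∫ ω, μ[f|m] ω * g ω ∂μ = ∫ ω, f ω * g ω ∂μ := by
  calc ∫ ω, μ[f|m] ω * g ω ∂μ = ∫ ω, μ[f * g|m] ω ∂μ :=
        integral_congr_ae (condExp_mul_of_stronglyMeasurable_right hg hfg hf).symm
    _ = ∫ ω, f ω * g ω ∂μ := integral_condExp hm

lemma integral_condExp_dotProduct_of_stronglyMeasurable [IsFiniteMeasure μ] (hm : m ≤ m₀)
    {Z W : Ω → Fin n → ℝ} (hZ : MemLp Z 2 μ) (hW : MemLp W 2 μ) (hWm : StronglyMeasurable[m] W) :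
    ∫ ω, μ[Z|m] ω ⬝ᵥ W ω ∂μ = ∫ ω, Z ω ⬝ᵥ W ω ∂μ := by
  have hZW : ∀ i, Integrable (fun ω => Z ω i * W ω i) μ :=
    fun i => (hZ.eval i).integrable_mul (hW.eval i)
  have hcondZW : ∀ i, Integrable (fun ω => μ[Z|m] ω i * W ω i) μ :=
    fun i => ((hZ.condExp one_le_two).eval i).integrable_mul (hW.eval i)
  simp only [dotProduct]
  rw [integral_finsetSum _ fun i _ => hcondZW i, integral_finsetSum _ fun i _ => hZW i]
  refine Finset.sum_congr rfl fun i _ => ?_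
  have hcoord : (fun ω => μ[Z|m] ω i) =ᵐ[μ] μ[fun ω => Z ω i|m] :=
    (ContinuousLinearMap.proj (R := ℝ) (φ := fun _ : Fin n => ℝ) i).comp_condExp_comm
      (hZ.integrable one_le_two)
  calc ∫ ω, μ[Z|m] ω i * W ω i ∂μ = ∫ ω, μ[fun ω => Z ω i|m] ω * W ω i ∂μ :=
        integral_congr_ae (hcoord.mul (ae_of_all _ fun _ => rfl))
    _ = ∫ ω, Z ω i * W ω i ∂μ :=
        integral_condExp_mul_of_stronglyMeasurable hm
          ((continuous_apply i).comp_stronglyMeasurable hWm)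
          ((hZ.eval i).integrable one_le_two) (hZW i)

theorem integral_sqn_centered_sub_mulVec_condExp [IsFiniteMeasure μ] (hm : m ≤ m₀)
    {Z : Ω → Fin n → ℝ} (hZ : MemLp Z 2 μ) {P : Matrix (Fin n) (Fin n) ℝ} (hP : Pᵀ * P = P) :
    ∫ ω, sqn ((Z ω - ∫ ω', Z ω' ∂μ) - P *ᵥ (μ[Z|m] ω - ∫ ω', Z ω' ∂μ)) ∂μ
      = (covMatrix μ Z).trace - (Pᵀ * covMatrix μ (μ[Z|m])).trace := by
  set c := ∫ ω', Z ω' ∂μ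
  set f := fun ω => Z ω - c with hf_def
  set g := fun ω => μ[Z|m] ω - c with hg_def
  have hf : MemLp f 2 μ := hZ.sub (memLp_const c)
  have hg : MemLp g 2 μ := (hZ.condExp one_le_two).sub (memLp_const c)
  have hPg : MemLp (fun ω => P *ᵥ g ω) 2 μ := hg.matrix_mulVec P
  have hcond_f : μ[f|m] =ᵐ[μ] g := by
    filter_upwards [condExp_sub (hZ.integrable one_le_two) (integrable_const c) m] with ω hω
    show μ[Z - fun _ => c|m] ω = g ω
    rw [hω, Pi.sub_apply, condExp_const hm]
  have hPg_meas : StronglyMeasurable[m] fun ω => P *ᵥ g ω :=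
    (continuous_const.matrix_mulVec continuous_id).comp_stronglyMeasurable
      (stronglyMeasurable_condExp.sub stronglyMeasurable_const)
  have hcross : ∫ ω, f ω ⬝ᵥ P *ᵥ g ω ∂μ = ∫ ω, g ω ⬝ᵥ P *ᵥ g ω ∂μ := by
    rw [← integral_condExp_dotProduct_of_stronglyMeasurable hm hf hPg hPg_meas]
    exact integral_congr_ae (hcond_f.mono fun ω h => by simp only [h])
  have hmean_cond : ∫ ω', μ[Z|m] ω' ∂μ = c := integral_condExp hm
  calc ∫ ω, sqn (f ω - P *ᵥ g ω) ∂μ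
      = ∫ ω, (f ω ⬝ᵥ f ω - 2 * (f ω ⬝ᵥ P *ᵥ g ω) + g ω ⬝ᵥ P *ᵥ g ω) ∂μ := by
        simp only [sqn_sub_mulVec_of_transpose_mul_self hP]
    _ = ∫ ω, f ω ⬝ᵥ f ω ∂μ - 2 * ∫ ω, f ω ⬝ᵥ P *ᵥ g ω ∂μ + ∫ ω, g ω ⬝ᵥ P *ᵥ g ω ∂μ := by
        rw [integral_add _ (integrable_dotProduct hg hPg),
          integral_sub (integrable_dotProduct hf hf) ((integrable_dotProduct hf hPg).const_mul 2),
          integral_const_mul]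
        exact (integrable_dotProduct hf hf).sub ((integrable_dotProduct hf hPg).const_mul 2)
    _ = ∫ ω, f ω ⬝ᵥ (1 : Matrix (Fin n) (Fin n) ℝ) *ᵥ f ω ∂μ
          - ∫ ω, g ω ⬝ᵥ P *ᵥ g ω ∂μ := by
        simp only [one_mulVec, hcross]
        ring
    _ = (covMatrix μ Z).trace - (Pᵀ * covMatrix μ (μ[Z|m])).trace := by
        rw [integral_centered_dotProduct_mulVec_eq_trace hZ, transpose_one, Matrix.one_mul,
          hg_def, ← hmean_cond, integral_centered_dotProduct_mulVec_eq_trace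
            (hZ.condExp one_le_two)]

end SecondMoments

theorem optimal_reduced_model_error_decomposition_general
    {d m r s : ℕ} {Ω : Type*} [MeasurableSpace Ω] (μ : Measure Ω) [IsProbabilityMeasure μ]
    (X : Ω → (Fin d → ℝ)) (hX : Measurable X)
    (G : (Fin d → ℝ) → (Fin m → ℝ)) (hGmeas : Measurable G)
    (hGL2 : Integrable (fun ω => sqn (G (X ω))) μ)
    (U : Matrix (Fin d) (Fin r) ℝ)
    (V : Matrix (Fin m) (Fin s) ℝ) (hV : Vᵀ * V = 1)
    (condG : Ω → (Fin m → ℝ))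
    (hcondG : condG =
      μ[(fun ω' => G (X ω')) | MeasurableSpace.comap (fun ω' => Uᵀ.mulVec (X ω')) inferInstance])
    (Gstar : Ω → (Fin m → ℝ))
    (hGstar : Gstar = fun ω =>
      (V * Vᵀ).mulVec (condG ω)
      + ((1 : Matrix (Fin m) (Fin m) ℝ) - V * Vᵀ).mulVec (∫ ω', G (X ω') ∂μ)) :
    ∫ ω, sqn (G (X ω) - Gstar ω) ∂μ
      = (covMatrix μ (fun ω => G (X ω))).trace
        - (Vᵀ * covMatrix μ condG * V).trace := by
  have hm : MeasurableSpace.comap (fun ω' => Uᵀ *ᵥ X ω') inferInstance ≤ ‹MeasurableSpace Ω› :=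
    ((continuous_const.matrix_mulVec continuous_id).measurable.comp hX).comap_le
  have hY : MemLp (fun ω => G (X ω)) 2 μ :=
    memLp_two_of_integrable_sqn (hGmeas.comp hX).aestronglyMeasurable hGL2
  have herror : ∀ ω, G (X ω) - Gstar ω = (G (X ω) - ∫ ω', G (X ω') ∂μ)
      - (V * Vᵀ) *ᵥ (condG ω - ∫ ω', G (X ω') ∂μ) := fun ω => by
    simp only [hGstar, mulVec_sub, sub_mulVec, one_mulVec]
    abel
  simp only [herror, ← trace_mul_transpose_transpose_mul, hcondG]
  exact integral_sqn_centered_sub_mulVec_condExp hm hY (transpose_mul_self_of_orthonormal hV)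

/-- the minimal error of the optimal reduced model satisfies
`E‖G(X) − G*(X)‖² = Tr(Cov(G(X))) − Tr(V_sᵀ Cov(E[G(X)|U_rᵀX]) V_s)`. -/
theorem optimal_reduced_model_error_decomposition
    {d m r s : ℕ} {Ω : Type*} [MeasurableSpace Ω] (μ : Measure Ω) [IsProbabilityMeasure μ]
    (X : Ω → (Fin d → ℝ)) (hX : Measurable X)
    (G : (Fin d → ℝ) → (Fin m → ℝ)) (hGmeas : Measurable G)
    (hGL2 : Integrable (fun ω => sqn (G (X ω))) μ)
    (U : Matrix (Fin d) (Fin r) ℝ) (hU : Uᵀ * U = 1)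
    (V : Matrix (Fin m) (Fin s) ℝ) (hV : Vᵀ * V = 1)
    (condG : Ω → (Fin m → ℝ))
    (hcondG : condG =
      μ[(fun ω' => G (X ω')) | MeasurableSpace.comap (fun ω' => Uᵀ.mulVec (X ω')) inferInstance])
    (Gstar : Ω → (Fin m → ℝ))
    (hGstar : Gstar = fun ω =>
      (V * Vᵀ).mulVec (condG ω)
      + ((1 : Matrix (Fin m) (Fin m) ℝ) - V * Vᵀ).mulVec (∫ ω', G (X ω') ∂μ)) :
    ∫ ω, sqn (G (X ω) - Gstar ω) ∂μ
      = (covMatrix μ (fun ω => G (X ω))).trace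
        - (Vᵀ * covMatrix μ condG * V).trace :=
  optimal_reduced_model_error_decomposition_general μ X hX G hGmeas hGL2 U V hV condG hcondG Gstar
    hGstar
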